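/- arXiv:2406.17222 — 5 statements merged into one kernel-verified Lean document; each statement's English description precedes it below -/
import Mathlib

section
/- For all n ≥ 2, the bracket satisfies the top-expansion identity [b_0, a_1, b_1, …, a_n, b_n] = (a_1/b_1)·[b_1, a_2, …, a_n, b_n] + (b_0/b_1)·[b_2, a_3, …, a_n, b_n]. -/
/-- The bracket `[b_m, a_{m+1}, b_{m+1}, …, a_{m+k}, b_{m+k}]` of Martin's continued
fraction algorithm, indexed by the starting index `m` and the length `k = n - m`. -/
def martinBracket {F : Type*} [Field F] (a b : ℕ → F) (m : ℕ) : ℕ → F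
  | 0 => b m
  | 1 => a (m + 1)
  | (k + 2) =>
      (a (m + k + 2) / b (m + k + 1)) * martinBracket a b m (k + 1)
        + (b (m + k + 2) / b (m + k + 1)) * martinBracket a b m k

/-- For all `n ≥ 2`, the top-expansion identity
`[b_0, a_1, b_1, …, a_n, b_n] = (a_1/b_1)·[b_1, a_2, …, a_n, b_n] + (b_0/b_1)·[b_2, a_3, …, a_n, b_n]`
holds (the bracket starting at `1` has length `n - 1`, the one starting at `2` has length `n - 2`). -/
theorem martinBracket_top_expansion {F : Type*} [Field F] (a b : ℕ → F)
    (hb : ∀ i, b i ≠ 0) (n : ℕ) (hn : 2 ≤ n) :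
    martinBracket a b 0 n =
      (a 1 / b 1) * martinBracket a b 1 (n - 1) + (b 0 / b 1) * martinBracket a b 2 (n - 2) := by
  induction n using Nat.strong_induction_on with
  | _ n ih =>
    match n, hn with
    | 2, _ =>
        simp only [martinBracket]
        field_simp [hb 1, hb 2]
        rw [show martinBracket a b 1 1 = a 2 from rfl, show martinBracket a b 2 0 = b 2 from rfl]
        ring
    | 3, _ =>
        simp only [martinBracket]
        field_simp [hb 1, hb 2]
        rw [show martinBracket a b 2 1 = a 3 from rfl]
        ring
    | (n + 4), _ =>
        have h1 := ih (n + 3) (by omega) (by omega)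
        have h2 := ih (n + 2) (by omega) (by omega)
        simp only [show n + 3 - 1 = n + 2 from rfl, show n + 3 - 2 = n + 1 from rfl,
          show n + 2 - 1 = n + 1 from rfl, show n + 2 - 2 = n from rfl,
          show n + 4 - 1 = n + 3 from rfl, show n + 4 - 2 = n + 2 from rfl] at h1 h2 ⊢
        have h0 : martinBracket a b 0 (n + 4) =
            (a (0 + (n + 2) + 2) / b (0 + (n + 2) + 1)) * martinBracket a b 0 (n + 3)
              + (b (0 + (n + 2) + 2) / b (0 + (n + 2) + 1)) * martinBracket a b 0 (n + 2) := rfl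
        have h3 : martinBracket a b 1 (n + 3) =
            (a (1 + (n + 1) + 2) / b (1 + (n + 1) + 1)) * martinBracket a b 1 (n + 2)
              + (b (1 + (n + 1) + 2) / b (1 + (n + 1) + 1)) * martinBracket a b 1 (n + 1) := rfl
        have h4 : martinBracket a b 2 (n + 2) =
            (a (2 + n + 2) / b (2 + n + 1)) * martinBracket a b 2 (n + 1)
              + (b (2 + n + 2) / b (2 + n + 1)) * martinBracket a b 2 n := rfl
        rw [h0, h1, h2, h3, h4,
          show 0 + (n + 2) + 2 = n + 4 from by ring, show 0 + (n + 2) + 1 = n + 3 from by ring,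
          show 1 + (n + 1) + 2 = n + 4 from by ring, show 1 + (n + 1) + 1 = n + 3 from by ring,
          show 2 + n + 2 = n + 4 from by ring, show 2 + n + 1 = n + 3 from by ring]
        ring
end

section
/- The bracket is palindromic: for all n ≥ 0, [b_0, a_1, b_1, …, a_n, b_n] = [b_n, a_n, b_{n−1}, a_{n−1}, …, a_1, b_0]. Precisely, if one defines the reversed sequences a'_i = a_{n+1−i} (for 1 ≤ i ≤ n) and b'_i = b_{n−i} (for 0 ≤ i ≤ n), then the bracket [b'_0, a'_1, b'_1, …, a'_n, b'_n] formed from (a', b') equals the bracket [b_0, a_1, b_1, …, a_n, b_n] formed from (a, b). -/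
/-- The bracket also satisfies a "left" recursion, peeling off the first entries. -/
theorem martinBracket_leftRec {F : Type*} [Field F] (a b : ℕ → F)
    (hb : ∀ i, b i ≠ 0) : ∀ k m,
    martinBracket a b m (k + 2) =
      a (m + 1) / b (m + 1) * martinBracket a b (m + 1) (k + 1)
        + b m / b (m + 1) * martinBracket a b (m + 2) k := by
  intro k
  induction k using Nat.strong_induction_on with
  | _ k ih =>
    match k with
    | 0 =>
      intro m
      have h1 := hb (m + 1)
      have h2 := hb (m + 2)
      simp only [martinBracket]
      field_simp
    | 1 =>
      intro m
      have h1 := hb (m + 1)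
      have h2 := hb (m + 2)
      simp only [martinBracket]
      field_simp
      ring
    | (k + 2) =>
      intro m
      have h1 := ih (k + 1) (by omega) m
      have h0 := ih k (by omega) m
      have e : martinBracket a b m (k + 4) =
          (a (m + k + 4) / b (m + k + 3)) * martinBracket a b m (k + 3)
            + (b (m + k + 4) / b (m + k + 3)) * martinBracket a b m (k + 2) := by
        show martinBracket a b m ((k + 2) + 2) = _
        rw [martinBracket]
        ring_nf
      have e1 : martinBracket a b (m + 1) (k + 3) =
          (a (m + k + 4) / b (m + k + 3)) * martinBracket a b (m + 1) (k + 2)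
            + (b (m + k + 4) / b (m + k + 3)) * martinBracket a b (m + 1) (k + 1) := by
        show martinBracket a b (m + 1) ((k + 1) + 2) = _
        rw [martinBracket]
        ring_nf
      have e2 : martinBracket a b (m + 2) (k + 2) =
          (a (m + k + 4) / b (m + k + 3)) * martinBracket a b (m + 2) (k + 1)
            + (b (m + k + 4) / b (m + k + 3)) * martinBracket a b (m + 2) k := by
        rw [martinBracket]
        ring_nf
      rw [show k + 2 + 2 = k + 4 from rfl, e, h1, h0, e1, e2]
      ring

/-- The bracket of length `k` of the reversed sequences, started at `m`,
equals the bracket of length `k` of the original sequences started at `n - m - k`. -/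
theorem martinBracket_rev_aux {F : Type*} [Field F] (a b : ℕ → F)
    (hb : ∀ i, b i ≠ 0) (n : ℕ) : ∀ k m, m + k ≤ n →
    martinBracket (fun i => a (n + 1 - i)) (fun i => b (n - i)) m k =
      martinBracket a b (n - m - k) k := by
  intro k
  induction k using Nat.strong_induction_on with
  | _ k ih =>
    match k with
    | 0 =>
      intro m hm
      simp only [martinBracket, Nat.sub_zero]
    | 1 =>
      intro m hm
      simp only [martinBracket]
      congr 1
      omega
    | (k + 2) =>
      intro m hm
      have h1 := ih (k + 1) (by omega) m (by omega)
      have h0 := ih k (by omega) m (by omega)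
      rw [martinBracket, h1, h0, martinBracket_leftRec a b hb k (n - m - (k + 2))]
      have e1 : n + 1 - (m + k + 2) = n - m - (k + 2) + 1 := by omega
      have e2 : n - (m + k + 1) = n - m - (k + 2) + 1 := by omega
      have e3 : n - (m + k + 2) = n - m - (k + 2) := by omega
      have e4 : n - m - (k + 1) = n - m - (k + 2) + 1 := by omega
      have e5 : n - m - k = n - m - (k + 2) + 2 := by omega
      rw [e1, e2, e3, e4, e5]

/-- The bracket is palindromic: for all `n ≥ 0`,
`[b_0, a_1, b_1, …, a_n, b_n] = [b_n, a_n, b_{n−1}, a_{n−1}, …, a_1, b_0]`.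
Precisely, the bracket of length `n` formed from the reversed sequences
`a'_i = a_{n+1−i}` and `b'_i = b_{n−i}` equals the bracket of length `n` formed
from `(a, b)`. -/
theorem martinBracket_palindrome {F : Type*} [Field F] (a b : ℕ → F)
    (hb : ∀ i, b i ≠ 0) (n : ℕ) :
    martinBracket (fun i => a (n + 1 - i)) (fun i => b (n - i)) 0 n =
      martinBracket a b 0 n := by
  have := martinBracket_rev_aux a b hb n n 0 (by omega)
  simpa using this
end

section
/- For all natural numbers m, n with n ≥ m + 2, the brackets satisfy the determinant-type identity [b_m, …, a_n, b_n]·[b_{m+1}, …, a_{n−1}, b_{n−1}] − [b_m, …, a_{n−1}, b_{n−1}]·[b_{m+1}, …, a_n, b_n] = (−1)^{n−m}·b_n·b_m. -/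
lemma martinBracket_det_aux {F : Type*} [Field F] (a b : ℕ → F)
    (hb : ∀ i, b i ≠ 0) (m : ℕ) :
    ∀ k, martinBracket a b m (k + 2) * martinBracket a b (m + 1) k
      - martinBracket a b m (k + 1) * martinBracket a b (m + 1) (k + 1)
      = (-1 : F) ^ k * b (m + k + 2) * b m
  | 0 => by
    simp only [martinBracket]
    have := hb (m + 1)
    field_simp
    ring
  | (k + 1) => by
    have ih := martinBracket_det_aux a b hb m k
    have h1 : martinBracket a b m (k + 1 + 2)
        = (a (m + k + 3) / b (m + k + 2)) * martinBracket a b m (k + 2)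
          + (b (m + k + 3) / b (m + k + 2)) * martinBracket a b m (k + 1) := by
      show (a (m + (k+1) + 2) / b (m + (k+1) + 1)) * _ + (b (m + (k+1) + 2) / b (m + (k+1) + 1)) * _ = _
      ring_nf
    have h2 : martinBracket a b (m + 1) (k + 2)
        = (a (m + k + 3) / b (m + k + 2)) * martinBracket a b (m + 1) (k + 1)
          + (b (m + k + 3) / b (m + k + 2)) * martinBracket a b (m + 1) k := by
      show (a (m + 1 + k + 2) / b (m + 1 + k + 1)) * _ + (b (m + 1 + k + 2) / b (m + 1 + k + 1)) * _ = _
      ring_nf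
    rw [h1, h2]
    have hB2 := hb (m + k + 2)
    have hgoal : (m + (k + 1) + 2) = m + k + 3 := by omega
    rw [hgoal]
    field_simp
    linear_combination (-(b (m + k + 3))) * ih


/-- For all `m, n` with `n ≥ m + 2`, the determinant-type identity
`[b_m, …, a_n, b_n]·[b_{m+1}, …, a_{n−1}, b_{n−1}]
  − [b_m, …, a_{n−1}, b_{n−1}]·[b_{m+1}, …, a_n, b_n] = (−1)^{n−m}·b_n·b_m`
holds; in terms of lengths, `[b_m, …, b_n] = martinBracket a b m (n - m)`,
`[b_{m+1}, …, b_{n−1}] = martinBracket a b (m+1) (n - m - 2)`, etc. -/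
theorem martinBracket_det {F : Type*} [Field F] (a b : ℕ → F)
    (hb : ∀ i, b i ≠ 0) (m n : ℕ) (hmn : m + 2 ≤ n) :
    martinBracket a b m (n - m) * martinBracket a b (m + 1) (n - m - 2)
      - martinBracket a b m (n - m - 1) * martinBracket a b (m + 1) (n - m - 1)
      = (-1 : F) ^ (n - m) * b n * b m := by
  obtain ⟨k, rfl⟩ : ∃ k, n = m + k + 2 := ⟨n - m - 2, by omega⟩
  have h1 : m + k + 2 - m = k + 2 := by omega
  have h2 : k + 2 - 2 = k := by omega
  have h3 : k + 2 - 1 = k + 1 := by omega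
  rw [h1, h2, h3, martinBracket_det_aux a b hb m k]
  ring
end

section
/- Let z be a complex number, let ζ, μ be positive reals and let δ be a real number with 0 < δ < ζ. Let p, q : ℕ → ℂ be sequences such that for all n ≥ 1: q_n ≠ 0, |q_n| > ζ·|q_{n−1}|, and |p_n·q_{n−1} − p_{n−1}·q_n| ≤ μ. Assume that p_n/q_n → z as n → ∞ and that |q_n·q_{n−1}| → ∞ as n → ∞. Then for every ε > 0 there exists N ∈ ℕ, independent of w, such that for every n ≥ N and every complex number w with |w| ≤ ζ − δ, one has q_n + w·q_{n−1} ≠ 0 and |z − (p_n + w·p_{n−1})/(q_n + w·q_{n−1})| < ε. -/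
open Filter

/-- Approximation lemma for Martin's continued fraction algorithm (abstract form).
If the convergents `p_n/q_n` of `z` satisfy `q_n ≠ 0`, `|q_n| > ζ·|q_{n−1}|`,
`|p_n·q_{n−1} − p_{n−1}·q_n| ≤ μ`, `p_n/q_n → z` and `|q_n·q_{n−1}| → ∞`, then for
every `ε > 0` there is `N` (independent of `w`) such that for all `n ≥ N` and every
`w` with `|w| ≤ ζ − δ`, the perturbed denominator `q_n + w·q_{n−1}` is nonzero and
`|z − (p_n + w·p_{n−1})/(q_n + w·q_{n−1})| < ε`. -/
theorem martin_approximation (z : ℂ) (ζ μ : ℝ) (hζ : 0 < ζ) (hμ : 0 < μ)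
    (δ : ℝ) (hδ : 0 < δ) (hδζ : δ < ζ) (p q : ℕ → ℂ)
    (hq0 : ∀ n, 1 ≤ n → q n ≠ 0)
    (hqgrow : ∀ n, 1 ≤ n → ‖q n‖ > ζ * ‖q (n - 1)‖)
    (hdet : ∀ n, 1 ≤ n → ‖p n * q (n - 1) - p (n - 1) * q n‖ ≤ μ)
    (hconv : Tendsto (fun n => p n / q n) atTop (nhds z))
    (hqq : Tendsto (fun n => ‖q n * q (n - 1)‖) atTop atTop) :
    ∀ ε > 0, ∃ N : ℕ, ∀ n ≥ N, ∀ w : ℂ, ‖w‖ ≤ ζ - δ →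
      q n + w * q (n - 1) ≠ 0 ∧
        ‖z - (p n + w * p (n - 1)) / (q n + w * q (n - 1))‖ < ε := by
  intro ε hε
  have hζδ : 0 < ζ - δ := sub_pos.mpr hδζ
  set C : ℝ := 2 * (ζ - δ) * μ / (δ * ε) with hC
  obtain ⟨N1, hN1⟩ := (Metric.tendsto_atTop.mp hconv) (ε / 2) (by positivity)
  obtain ⟨N2, hN2⟩ := Filter.eventually_atTop.mp (hqq.eventually_ge_atTop (max C 1 + 1))
  refine ⟨max (max N1 N2) 1, fun n hn w hw => ?_⟩
  have hn1 : 1 ≤ n := le_trans (le_max_right _ _) hn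
  have hnN1 : N1 ≤ n := le_trans (le_trans (le_max_left _ _) (le_max_left _ _)) hn
  have hnN2 : N2 ≤ n := le_trans (le_trans (le_max_right _ _) (le_max_left _ _)) hn
  set m := n - 1 with hm
  have hqq' : max C 1 + 1 ≤ ‖q n * q m‖ := hN2 n hnN2
  have hqqC : C < ‖q n * q m‖ := by
    have := le_max_left C 1; linarith
  have hqqpos : 0 < ‖q n * q m‖ := by
    have := le_max_right C 1; linarith
  have hqn : q n ≠ 0 := hq0 n hn1
  have hqm : q m ≠ 0 := by
    intro h; rw [h, mul_zero] at hqqpos; simp at hqqpos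
  have habsqm : 0 < ‖q m‖ := norm_pos_iff.mpr hqm
  have habsqn : 0 < ‖q n‖ := norm_pos_iff.mpr hqn
  have hgrow := hqgrow n hn1
  have htri : ‖q n‖ ≤ ‖q n + w * q m‖ + ‖w * q m‖ := by
    calc ‖q n‖ = ‖(q n + w * q m) + (-(w * q m))‖ := by ring_nf
    _ ≤ ‖q n + w * q m‖ + ‖-(w * q m)‖ := norm_add_le _ _
    _ = ‖q n + w * q m‖ + ‖w * q m‖ := by rw [norm_neg]
  have hwqm : ‖w * q m‖ ≤ (ζ - δ) * ‖q m‖ := by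
    rw [norm_mul]
    exact mul_le_mul_of_nonneg_right hw (norm_nonneg _)
  have hDlow : δ * ‖q m‖ < ‖q n + w * q m‖ := by
    nlinarith
  have hDpos : 0 < ‖q n + w * q m‖ := lt_of_le_of_lt (by positivity) hDlow
  have hD : q n + w * q m ≠ 0 := by
    intro h; rw [h] at hDpos; simp at hDpos
  refine ⟨hD, ?_⟩
  have key : p n / q n - (p n + w * p m) / (q n + w * q m)
      = w * (p n * q m - p m * q n) / (q n * (q n + w * q m)) := by
    field_simp
    ring
  have habs1 : ‖p n / q n - (p n + w * p m) / (q n + w * q m)‖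
      ≤ (ζ - δ) * μ / (δ * ‖q n * q m‖) := by
    rw [key, norm_div, norm_mul, norm_mul]
    have hdet' := hdet n hn1
    rw [div_le_div_iff₀ (by positivity) (by positivity)]
    have h1 : ‖w‖ * ‖p n * q m - p m * q n‖ ≤ (ζ - δ) * μ := by
      apply mul_le_mul hw hdet' (norm_nonneg _) (le_of_lt hζδ)
    have h2 : δ * ‖q n * q m‖ ≤ ‖q n‖ * ‖q n + w * q m‖ := by
      rw [norm_mul]
      calc δ * (‖q n‖ * ‖q m‖)
          = ‖q n‖ * (δ * ‖q m‖) := by ring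
        _ ≤ ‖q n‖ * ‖q n + w * q m‖ :=
            mul_le_mul_of_nonneg_left (le_of_lt hDlow) (norm_nonneg _)
    calc ‖w‖ * ‖p n * q m - p m * q n‖ * (δ * ‖q n * q m‖)
        ≤ (ζ - δ) * μ * (δ * ‖q n * q m‖) :=
          mul_le_mul_of_nonneg_right h1 (by positivity)
      _ ≤ (ζ - δ) * μ * (‖q n‖ * ‖q n + w * q m‖) :=
          mul_le_mul_of_nonneg_left h2 (by positivity)
  have habs2 : (ζ - δ) * μ / (δ * ‖q n * q m‖) < ε / 2 := by
    rw [div_lt_iff₀ (by positivity)]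
    have : 2 * (ζ - δ) * μ / (δ * ε) < ‖q n * q m‖ := hqqC
    rw [div_lt_iff₀ (by positivity)] at this
    nlinarith
  have hz := hN1 n hnN1
  rw [Complex.dist_eq] at hz
  calc ‖z - (p n + w * p m) / (q n + w * q m)‖
      = ‖(z - p n / q n) + (p n / q n - (p n + w * p m) / (q n + w * q m))‖ := by
        ring_nf
    _ ≤ ‖z - p n / q n‖
        + ‖p n / q n - (p n + w * p m) / (q n + w * q m)‖ := norm_add_le _ _
    _ < ε / 2 + ε / 2 := by
        have : ‖z - p n / q n‖ < ε / 2 := by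
          rwa [← norm_neg, neg_sub] at hz
        linarith [lt_of_le_of_lt habs1 habs2]
    _ = ε := by ring
end

section
/- Let δ, μ be positive reals, let w be a complex number, and let p, p', q, q' be complex numbers such that q' ≠ 0, q ≠ 0, |q' + w·q| > δ·|q|, and |p'·q − p·q'| ≤ μ. Then |p'/q' − (p' + w·p)/(q' + w·q)| ≤ |w|·μ/(δ·|q'|·|q|). -/
/-- Quantitative error estimate for the perturbed convergent: if `q' ≠ 0`, `q ≠ 0`,
`|q' + w·q| > δ·|q|` and `|p'·q − p·q'| ≤ μ`, then
`|p'/q' − (p' + w·p)/(q' + w·q)| ≤ |w|·μ/(δ·|q'|·|q|)`. -/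
theorem perturbed_convergent_estimate (δ μ : ℝ) (hδ : 0 < δ) (hμ : 0 < μ)
    (w p p' q q' : ℂ) (hq' : q' ≠ 0) (hq : q ≠ 0)
    (hden : ‖q' + w * q‖ > δ * ‖q‖)
    (hdet : ‖p' * q - p * q'‖ ≤ μ) :
    ‖p' / q' - (p' + w * p) / (q' + w * q)‖
      ≤ ‖w‖ * μ / (δ * ‖q'‖ * ‖q‖) := by
  have hqpos : 0 < ‖q‖ := norm_pos_iff.mpr hq
  have hq'pos : 0 < ‖q'‖ := norm_pos_iff.mpr hq'
  have hdenne : q' + w * q ≠ 0 := by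
    intro h
    rw [h] at hden
    simp at hden
    nlinarith
  have key : p' / q' - (p' + w * p) / (q' + w * q)
      = w * (p' * q - p * q') / (q' * (q' + w * q)) := by
    field_simp
    ring
  rw [key, norm_div, norm_mul, norm_mul]
  rw [div_le_div_iff₀ (mul_pos hq'pos (norm_pos_iff.mpr hdenne)) (by positivity)]
  have h1 : ‖w‖ * ‖p' * q - p * q'‖ ≤ ‖w‖ * μ :=
    mul_le_mul_of_nonneg_left hdet (norm_nonneg w)
  have h2 : δ * ‖q'‖ * ‖q‖
      ≤ ‖q'‖ * ‖q' + w * q‖ := by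
    have := hden.le
    calc δ * ‖q'‖ * ‖q‖
        = ‖q'‖ * (δ * ‖q‖) := by ring
      _ ≤ ‖q'‖ * ‖q' + w * q‖ :=
          mul_le_mul_of_nonneg_left this hq'pos.le
  calc ‖w‖ * ‖p' * q - p * q'‖ * (δ * ‖q'‖ * ‖q‖)
      ≤ ‖w‖ * μ * (‖q'‖ * ‖q' + w * q‖) := by
        apply mul_le_mul h1 h2 (by positivity) (by positivity)
end
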